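/- Let p ≥ 0 be an integer, h > 0, and x_i ∈ ℝ. Suppose u^R : ℝ → ℝ coincides with a polynomial of degree at most p on (x_i − h/2, x_i) and with a polynomial of degree at most p on (x_i, x_i + h/2). Let J^k = (d^k/dx^k)u^R(x_i⁺) − (d^k/dx^k)u^R(x_i⁻) and D^k = J^k / h^{p+1−k} for 0 ≤ k ≤ p. Then for every polynomial v of degree at most p, the supremum of |v(x) − u^R(x)| over x ∈ (x_i − h/2, x_i + h/2) is at least h^{p+1} √(Q(D^0, …, D^p)). -/

import Mathlib

/-!
Let `S` be the supremum and rescale the cell to `(-1/2, 1/2)` by `x = xᵢ + h ξ`. Taylor expansion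
at `xᵢ` gives `f_D(ξ) = (q_r - q_l)(xᵢ + h ξ) / (2 h^{p+1})`, so the competitor
`w(ξ) = (v - (q_l + q_r)/2)(xᵢ + h ξ) / h^{p+1}` satisfies `w + f_D = (v - q_l)(xᵢ + h ξ) / h^{p+1}`
and `w - f_D = (v - q_r)(xᵢ + h ξ) / h^{p+1}`. Both are bounded by `S / h^{p+1}` on their
half-cell (by continuity also at the endpoints, where `u^R` is not controlled), hence
`Q(D) ≤ Qerr(w) ≤ (S / h^{p+1})²`.
-/

open MeasureTheory Polynomial

/-- `fd p d ξ = (1/2) Σ_{k=0}^p (d_k/k!) ξ^k`. -/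
noncomputable def fd (p : ℕ) (d : Fin (p+1) → ℝ) (ξ : ℝ) : ℝ :=
  (1/2) * ∑ k : Fin (p+1), d k / (Nat.factorial k) * ξ ^ (k : ℕ)

/-- The error functional whose infimum over polynomials of degree ≤ p defines `Qform`. -/
noncomputable def Qerr (p : ℕ) (d : Fin (p+1) → ℝ) (v : Polynomial ℝ) : ℝ :=
  (∫ ξ in (-(1:ℝ)/2)..0, (v.eval ξ + fd p d ξ)^2) +
  (∫ ξ in (0:ℝ)..(1/2), (v.eval ξ - fd p d ξ)^2)

/-- `Q(d) = inf_{v ∈ P} Qerr p d v`. -/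
noncomputable def Qform (p : ℕ) (d : Fin (p+1) → ℝ) : ℝ :=
  sInf {q : ℝ | ∃ v : Polynomial ℝ, v.natDegree ≤ p ∧ q = Qerr p d v}

open Set
open scoped Nat

lemma Polynomial.eval_add_eq_sum_iterate_derivative {p : ℕ} {q : ℝ[X]} (hq : q.natDegree ≤ p)
    (x t : ℝ) :
    q.eval (x + t) = ∑ k : Fin (p + 1), (derivative^[k] q).eval x / (k ! : ℝ) * t ^ (k : ℕ) := by
  rw [add_comm x t, ← taylor_eval,
    eval_eq_sum_range' (n := p + 1) (by rw [natDegree_taylor]; omega), ← Fin.sum_univ_eq_sum_range]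
  refine Finset.sum_congr rfl fun k _ => ?_
  rw [taylor_coeff, ← factorial_smul_hasseDeriv, LinearMap.smul_apply, eval_smul, nsmul_eq_mul,
    mul_div_cancel_left₀ _ (by positivity)]

/-- The scaled jumps `Dᵏ` of the paper. -/
noncomputable def scaledJump (p : ℕ) (h xi : ℝ) (ql qr : ℝ[X]) (k : Fin (p + 1)) : ℝ :=
  ((derivative^[k] qr).eval xi - (derivative^[k] ql).eval xi) / h ^ (p + 1 - k)

lemma fd_scaledJump {p : ℕ} {h : ℝ} (hh : h ≠ 0) (xi : ℝ) {ql qr : ℝ[X]}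
    (hql : ql.natDegree ≤ p) (hqr : qr.natDegree ≤ p) (ξ : ℝ) :
    fd p (scaledJump p h xi ql qr) ξ
      = (qr.eval (xi + h * ξ) - ql.eval (xi + h * ξ)) / (2 * h ^ (p + 1)) := by
  rw [eval_add_eq_sum_iterate_derivative hqr, eval_add_eq_sum_iterate_derivative hql,
    ← Finset.sum_sub_distrib, Finset.sum_div, fd, Finset.mul_sum]
  refine Finset.sum_congr rfl fun k _ => ?_
  have hpow : h ^ (p + 1 - k) * h ^ (k : ℕ) = h ^ (p + 1) := by
    rw [← pow_add, Nat.sub_add_cancel k.is_lt.le]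
  rw [scaledJump, ← hpow, mul_pow]
  field_simp

lemma continuous_fd (p : ℕ) (d : Fin (p + 1) → ℝ) : Continuous (fd p d) := by
  unfold fd; fun_prop

lemma Qerr_nonneg (p : ℕ) (d : Fin (p + 1) → ℝ) (w : ℝ[X]) : 0 ≤ Qerr p d w :=
  add_nonneg (intervalIntegral.integral_nonneg (by norm_num) fun _ _ => sq_nonneg _)
    (intervalIntegral.integral_nonneg (by norm_num) fun _ _ => sq_nonneg _)

lemma Qform_le_Qerr {p : ℕ} (d : Fin (p + 1) → ℝ) {w : ℝ[X]} (hw : w.natDegree ≤ p) :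
    Qform p d ≤ Qerr p d w :=
  csInf_le ⟨0, by rintro _ ⟨v, -, rfl⟩; exact Qerr_nonneg p d v⟩ ⟨w, hw, rfl⟩

lemma intervalIntegral.integral_sq_le_of_abs_le {f : ℝ → ℝ} {a b M : ℝ} (hab : a ≤ b)
    (hf : Continuous f) (hM : ∀ x ∈ Icc a b, |f x| ≤ M) :
    ∫ x in a..b, f x ^ 2 ≤ M ^ 2 * (b - a) := by
  calc ∫ x in a..b, f x ^ 2 ≤ ∫ _ in a..b, M ^ 2 :=
        integral_mono_on hab ((hf.pow 2).intervalIntegrable a b) intervalIntegrable_const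
          fun x hx => sq_abs (f x) ▸ pow_le_pow_left₀ (abs_nonneg _) (hM x hx) 2
    _ = M ^ 2 * (b - a) := by rw [integral_const, smul_eq_mul, mul_comm]

lemma Qerr_le_sq {p : ℕ} {d : Fin (p + 1) → ℝ} {w : ℝ[X]} {M : ℝ}
    (hl : ∀ ξ ∈ Icc (-(1 : ℝ) / 2) 0, |w.eval ξ + fd p d ξ| ≤ M)
    (hr : ∀ ξ ∈ Icc (0 : ℝ) (1 / 2), |w.eval ξ - fd p d ξ| ≤ M) :
    Qerr p d w ≤ M ^ 2 := by
  have hl' := intervalIntegral.integral_sq_le_of_abs_le (f := fun ξ => w.eval ξ + fd p d ξ)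
    (by norm_num) (w.continuous.add (continuous_fd p d)) hl
  have hr' := intervalIntegral.integral_sq_le_of_abs_le (f := fun ξ => w.eval ξ - fd p d ξ)
    (by norm_num) (w.continuous.sub (continuous_fd p d)) hr
  rw [Qerr]
  linarith

lemma Qform_scaledJump_le {p : ℕ} {h xi S : ℝ} (hh : 0 < h) {ql qr v : ℝ[X]}
    (hql : ql.natDegree ≤ p) (hqr : qr.natDegree ≤ p) (hv : v.natDegree ≤ p)
    (hSl : ∀ x ∈ Icc (xi - h / 2) xi, |v.eval x - ql.eval x| ≤ S)
    (hSr : ∀ x ∈ Icc xi (xi + h / 2), |v.eval x - qr.eval x| ≤ S) :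
    Qform p (scaledJump p h xi ql qr) ≤ (S / h ^ (p + 1)) ^ 2 := by
  set w : ℝ[X] := C (h ^ (p + 1))⁻¹ * (v - C (1 / 2) * (ql + qr)).comp (C h * X + C xi)
  have hw_deg : w.natDegree ≤ p := by
    have hmid : (v - C (1 / 2) * (ql + qr)).natDegree ≤ p :=
      (natDegree_sub_le _ _).trans <| max_le hv <| (natDegree_C_mul_le _ _).trans <|
        (natDegree_add_le _ _).trans (max_le hql hqr)
    calc w.natDegree ≤ (v - C (1 / 2) * (ql + qr)).natDegree * (C h * X + C xi).natDegree :=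
          (natDegree_C_mul_le _ _).trans natDegree_comp_le
      _ ≤ p * 1 := Nat.mul_le_mul hmid natDegree_linear_le
      _ = p := mul_one p
  have hw_eval (ξ : ℝ) : w.eval ξ
      = (v.eval (xi + h * ξ) - (ql.eval (xi + h * ξ) + qr.eval (xi + h * ξ)) / 2) / h ^ (p + 1) := by
    simp only [w, eval_mul, eval_C, eval_comp, eval_sub, eval_add, eval_X, add_comm (h * ξ) xi]
    ring
  have hfd := fd_scaledJump hh.ne' xi hql hqr
  have hbound {q : ℝ[X]} {ξ : ℝ} (hq : |v.eval (xi + h * ξ) - q.eval (xi + h * ξ)| ≤ S) :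
      |(v.eval (xi + h * ξ) - q.eval (xi + h * ξ)) / h ^ (p + 1)| ≤ S / h ^ (p + 1) := by
    rw [abs_div, abs_of_pos (pow_pos hh _)]
    exact div_le_div_of_nonneg_right hq (pow_pos hh _).le
  refine (Qform_le_Qerr _ hw_deg).trans (Qerr_le_sq (fun ξ hξ => ?_) (fun ξ hξ => ?_))
  · have hx : xi + h * ξ ∈ Icc (xi - h / 2) xi := ⟨by nlinarith [hξ.1], by nlinarith [hξ.2]⟩
    convert hbound (hSl _ hx) using 2
    rw [hw_eval, hfd]; ring
  · have hx : xi + h * ξ ∈ Icc xi (xi + h / 2) := ⟨by nlinarith [hξ.1], by nlinarith [hξ.2]⟩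
    convert hbound (hSr _ hx) using 2
    rw [hw_eval, hfd]; ring

lemma bddAbove_image_Ioo_of_eqOn {f gl gr : ℝ → ℝ} {a b c : ℝ}
    (hgl : ContinuousOn gl (Icc a c)) (hgr : ContinuousOn gr (Icc c b))
    (hfl : EqOn f gl (Ioo a c)) (hfr : EqOn f gr (Ioo c b)) :
    BddAbove (f '' Ioo a b) := by
  refine (((isCompact_Icc.bddAbove_image hgl).union (isCompact_Icc.bddAbove_image hgr)).insert
    (f c)).mono ?_
  rintro _ ⟨x, hx, rfl⟩
  rcases lt_trichotomy x c with hxc | rfl | hcx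
  · exact .inr (.inl ⟨x, Ioo_subset_Icc_self ⟨hx.1, hxc⟩, (hfl ⟨hx.1, hxc⟩).symm⟩)
  · exact .inl rfl
  · exact .inr (.inr ⟨x, Ioo_subset_Icc_self ⟨hcx, hx.2⟩, (hfr ⟨hcx, hx.2⟩).symm⟩)

lemma le_of_forall_mem_Ioo_le {g : ℝ → ℝ} (hg : Continuous g) {a b S : ℝ} (hab : a ≠ b)
    (hS : ∀ x ∈ Ioo a b, g x ≤ S) : ∀ x ∈ Icc a b, g x ≤ S := fun _ hx =>
  le_on_closure hS hg.continuousOn continuousOn_const (closure_Ioo hab ▸ hx)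

/-- on one cell, for every polynomial `v` of degree ≤ p, the sup of
`|v - u^R|` over `(x_i - h/2, x_i + h/2)` is at least `h^{p+1} √(Q(D⁰,…,Dᵖ))`. -/
theorem cell_sup_ge_scaled_sqrt_Qform (p : ℕ) (h xi : ℝ) (hh : 0 < h)
    (uR : ℝ → ℝ) (ql qr : Polynomial ℝ)
    (hql : ql.natDegree ≤ p) (hqr : qr.natDegree ≤ p)
    (hL : ∀ x ∈ Set.Ioo (xi - h/2) xi, uR x = ql.eval x)
    (hR : ∀ x ∈ Set.Ioo xi (xi + h/2), uR x = qr.eval x)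
    (v : Polynomial ℝ) (hv : v.natDegree ≤ p) :
    sSup ((fun x => |v.eval x - uR x|) '' Set.Ioo (xi - h/2) (xi + h/2)) ≥
      h^(p+1) * Real.sqrt (Qform p (fun k =>
        ((Polynomial.derivative^[(k:ℕ)] qr).eval xi -
         (Polynomial.derivative^[(k:ℕ)] ql).eval xi) / h^(p+1-(k:ℕ)))) := by
  set S := sSup ((fun x => |v.eval x - uR x|) '' Ioo (xi - h / 2) (xi + h / 2))
  have hcl : Continuous fun x => |v.eval x - ql.eval x| := by fun_prop
  have hcr : Continuous fun x => |v.eval x - qr.eval x| := by fun_prop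
  have hbdd : BddAbove ((fun x => |v.eval x - uR x|) '' Ioo (xi - h / 2) (xi + h / 2)) :=
    bddAbove_image_Ioo_of_eqOn (c := xi) hcl.continuousOn hcr.continuousOn
      (fun x hx => by simp only [hL x hx]) (fun x hx => by simp only [hR x hx])
  have hle_S {x} (hx : x ∈ Ioo (xi - h / 2) (xi + h / 2)) : |v.eval x - uR x| ≤ S :=
    le_csSup hbdd ⟨x, hx, rfl⟩
  have hSl := le_of_forall_mem_Ioo_le hcl (by linarith) fun x hx =>
    hL x hx ▸ hle_S ⟨hx.1, by linarith [hx.2]⟩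
  have hSr := le_of_forall_mem_Ioo_le hcr (by linarith) fun x hx =>
    hR x hx ▸ hle_S ⟨by linarith [hx.1], hx.2⟩
  have hS : 0 ≤ S := (abs_nonneg _).trans (hle_S (x := xi) ⟨by linarith, by linarith⟩)
  have hQ := Qform_scaledJump_le hh hql hqr hv hSl hSr
  calc h ^ (p + 1) * √(Qform p (scaledJump p h xi ql qr))
      ≤ h ^ (p + 1) * (S / h ^ (p + 1)) := by
        gcongr
        exact Real.sqrt_le_left (by positivity) |>.mpr hQ
    _ = S := by field_simp
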